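/- Let X be a topological space, Y and Z locally compact Hausdorff spaces, f₁ : X → Y continuous and f₂ : Y → Z proper continuous. Then the relative Stone–Čech compactifications β_Y(X, f₁) and β_Z(X, f₂ ∘ f₁) are homeomorphic; equivalently, C_b(X)·f₁*(C_0(Y)) = C_b(X)·(f₂∘f₁)*(C_0(Z)) as C*-subalgebras of C_b(X). -/

import Mathlib

open scoped ZeroAtInfty BoundedContinuousFunction
open WeakDual Filter

/-- The pullback `r*(h) = h ∘ r` of a `C₀` function along a continuous map, as a bounded
continuous function. -/
noncomputable def pullbackBCF {X B : Type*} [TopologicalSpace X] [TopologicalSpace B]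
    (r : C(X, B)) (h : C₀(B, ℂ)) : X →ᵇ ℂ :=
  h.toBCF.compContinuous r

/-- The commutative C*-algebra `H_X = C_b(X) · r*(C₀(B))`, realised as the closure of the
non-unital star subalgebra of `C_b(X)` generated by the products `f · r*(h)`. -/
noncomputable def relSCAlg {X B : Type*} [TopologicalSpace X] [TopologicalSpace B]
    (r : C(X, B)) : NonUnitalStarSubalgebra ℂ (X →ᵇ ℂ) :=
  (NonUnitalStarAlgebra.adjoin ℂ
    {w : X →ᵇ ℂ | ∃ f : X →ᵇ ℂ, ∃ h : C₀(B, ℂ), w = f * pullbackBCF r h}).topologicalClosure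

/-- The relative Stone–Čech compactification `β_B X` of a `B`-space `(X, r)`: the character
space (spectrum) of `H_X = C_b(X) · r*(C₀(B))`. -/
noncomputable def RelSC {X B : Type*} [TopologicalSpace X] [TopologicalSpace B]
    (r : C(X, B)) :=
  characterSpace ℂ (relSCAlg r)

/-- Evaluation at a point `x : X`, as an element of the weak dual of `H_X`. -/
noncomputable def relSCEvalChar {X B : Type*} [TopologicalSpace X] [TopologicalSpace B]
    (r : C(X, B)) (x : X) : WeakDual ℂ (relSCAlg r) :=
  (BoundedContinuousFunction.evalCLM ℂ x).comp
    (⟨{ toFun := fun f => (f : X →ᵇ ℂ),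
        map_add' := fun _ _ => rfl,
        map_smul' := fun _ _ => rfl }, continuous_subtype_val⟩ :
      relSCAlg r →L[ℂ] (X →ᵇ ℂ))

/-- The canonical map `i : X → β_B X`, sending a point to the evaluation character. -/
noncomputable def relSCMap {X B : Type*} [TopologicalSpace X] [TopologicalSpace B]
    [LocallyCompactSpace B] [T2Space B] (r : C(X, B)) (x : X) : RelSC r := by
  refine ⟨relSCEvalChar r x, ?_, fun f g => rfl⟩
  obtain ⟨h, h_comp, -, hx⟩ := exists_continuous_nonneg_pos (r x)
  have hC0 : Tendsto (fun b => (h b : ℂ)) (Filter.cocompact B) (nhds 0) := by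
    simpa [Function.comp_def] using ((Complex.continuous_ofReal.tendsto 0).comp
      (HasCompactSupport.is_zero_at_infty h_comp))
  set h' : C₀(B, ℂ) := ⟨⟨fun b => (h b : ℂ), Complex.continuous_ofReal.comp h.continuous⟩, hC0⟩
  have hmem : (1 : X →ᵇ ℂ) * pullbackBCF r h' ∈ relSCAlg r :=
    (NonUnitalStarAlgebra.adjoin ℂ _).le_topologicalClosure
      (NonUnitalStarAlgebra.subset_adjoin ℂ _ ⟨1, h', rfl⟩)
  intro h0
  have h2 : ((1 : X →ᵇ ℂ) * pullbackBCF r h') x = 0 := by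
    have := congrArg (fun φ : WeakDual ℂ (relSCAlg r) => φ ⟨_, hmem⟩) h0
    exact this
  apply hx
  have h3 : (h (r x) : ℂ) = 0 := by
    simpa [pullbackBCF, h', BoundedContinuousFunction.coe_compContinuous] using h2
  exact_mod_cast h3


/-! Pulling back along the proper map `f₂` sends `C₀(Z)` into `C₀(Y)`, so every generator
`f · (f₂ ∘ f₁)*(g)` is already a generator `f · f₁*(g ∘ f₂)`. Conversely, given `h ∈ C₀(Y)`, take a
compact `K ⊆ Y` off which `|h|` is small and, by Urysohn, `g ∈ C_c(Z)` with `0 ≤ g ≤ 1` and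
`g = 1` on `f₂(K)`; then `h · f₂*(g)` is uniformly close to `h`, so `f · f₁*(h)` is a limit of the
generators `(f · f₁*(h)) · (f₂ ∘ f₁)*(g)`. Equal algebras have the same spectrum. -/

open Set
open scoped CompactlySupported

lemma IsProperMap.tendsto_cocompact {Y Z : Type*} [TopologicalSpace Y] [TopologicalSpace Z]
    {p : Y → Z} (hp : IsProperMap p) : Tendsto p (cocompact Y) (cocompact Z) :=
  hasBasis_cocompact.tendsto_right_iff.mpr fun _ hK ↦ (hp.isCompact_preimage hK).compl_mem_cocompact

lemma ZeroAtInftyContinuousMap.exists_isCompact_norm_lt {Y E : Type*} [TopologicalSpace Y]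
    [SeminormedAddCommGroup E] (h : C₀(Y, E)) {δ : ℝ} (hδ : 0 < δ) :
    ∃ K : Set Y, IsCompact K ∧ ∀ y ∉ K, ‖h y‖ < δ := by
  obtain ⟨K, hK, hKsub⟩ := mem_cocompact.mp (zero_at_infty h (Metric.ball_mem_nhds 0 hδ))
  exact ⟨K, hK, fun y hy ↦ mem_ball_zero_iff.mp (hKsub hy)⟩

section

variable {X Y Z 𝕜 : Type*} [TopologicalSpace X] [TopologicalSpace Y] [TopologicalSpace Z]

lemma exists_zeroAtInftyContinuousMap_eqOn_one [RegularSpace Z] [LocallyCompactSpace Z] [RCLike 𝕜]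
    {K : Set Z} (hK : IsCompact K) :
    ∃ g : C₀(Z, 𝕜), EqOn g 1 K ∧ ∀ z, ‖1 - g z‖ ≤ 1 := by
  obtain ⟨g, hg1, -, hg_supp, hg01⟩ :=
    exists_continuous_one_zero_of_isCompact hK isClosed_empty (disjoint_empty K)
  let gc : C_c(Z, 𝕜) := ⟨(⟨RCLike.ofReal, RCLike.continuous_ofReal⟩ : C(ℝ, 𝕜)).comp g,
    hg_supp.comp_left RCLike.ofReal_zero⟩
  refine ⟨gc, fun z hz ↦ ?_, fun z ↦ ?_⟩
  · simp [gc, hg1 hz]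
  · obtain ⟨h0, h1⟩ := hg01 z
    have : (1 : 𝕜) - gc z = ((1 - g z : ℝ) : 𝕜) := by simp [gc]
    change ‖(1 : 𝕜) - gc z‖ ≤ 1
    rw [this, RCLike.norm_ofReal, abs_le]
    constructor <;> linarith

lemma ZeroAtInftyContinuousMap.exists_norm_sub_mul_compContinuous_le [RegularSpace Z]
    [LocallyCompactSpace Z] [RCLike 𝕜] (p : C(Y, Z)) (h : C₀(Y, 𝕜)) {δ : ℝ} (hδ : 0 < δ) :
    ∃ g : C₀(Z, 𝕜), ‖h.toBCF - h.toBCF * g.toBCF.compContinuous p‖ ≤ δ := by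
  obtain ⟨K, hK, hKδ⟩ := h.exists_isCompact_norm_lt hδ
  obtain ⟨g, hg1, hg⟩ := exists_zeroAtInftyContinuousMap_eqOn_one (𝕜 := 𝕜) (hK.image p.continuous)
  refine ⟨g, (BoundedContinuousFunction.norm_le hδ.le).mpr fun y ↦ ?_⟩
  have hy : (h.toBCF - h.toBCF * g.toBCF.compContinuous p) y = h y * (1 - g (p y)) := by
    simp [mul_sub]
  rw [hy, norm_mul]
  by_cases hyK : y ∈ K
  · simp [hg1 (mem_image_of_mem p hyK), hδ.le]
  · simpa using mul_le_mul (hKδ y hyK).le (hg (p y)) (norm_nonneg _) hδ.le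

lemma mul_pullbackBCF_mem_relSCAlg (r : C(X, Y)) (f : X →ᵇ ℂ) (h : C₀(Y, ℂ)) :
    f * pullbackBCF r h ∈ relSCAlg r :=
  (NonUnitalStarAlgebra.adjoin ℂ _).le_topologicalClosure
    (NonUnitalStarAlgebra.subset_adjoin ℂ _ ⟨f, h, rfl⟩)

lemma isClosed_relSCAlg (r : C(X, Y)) : IsClosed (relSCAlg r : Set (X →ᵇ ℂ)) :=
  NonUnitalStarSubalgebra.isClosed_topologicalClosure _

lemma relSCAlg_le_of_forall_mem (r : C(X, Y)) {S : NonUnitalStarSubalgebra ℂ (X →ᵇ ℂ)}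
    (hS : IsClosed (S : Set (X →ᵇ ℂ))) (hrS : ∀ f h, f * pullbackBCF r h ∈ S) :
    relSCAlg r ≤ S :=
  NonUnitalStarSubalgebra.topologicalClosure_minimal _
    (NonUnitalStarAlgebra.adjoin_le <| by rintro _ ⟨f, h, rfl⟩; exact hrS f h) hS

lemma relSCAlg_comp_le (r : C(X, Y)) (p : C(Y, Z))
    (hp : Tendsto p (cocompact Y) (cocompact Z)) :
    relSCAlg (p.comp r) ≤ relSCAlg r :=
  relSCAlg_le_of_forall_mem _ (isClosed_relSCAlg r) fun f g ↦
    mul_pullbackBCF_mem_relSCAlg r f (g.comp ⟨p, hp⟩)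

lemma relSCAlg_le_comp [RegularSpace Z] [LocallyCompactSpace Z] (r : C(X, Y)) (p : C(Y, Z)) :
    relSCAlg r ≤ relSCAlg (p.comp r) := by
  have hclosed := isClosed_relSCAlg (p.comp r)
  refine relSCAlg_le_of_forall_mem r hclosed fun f h ↦ ?_
  rw [← SetLike.mem_coe, ← hclosed.closure_eq, Metric.mem_closure_iff]
  intro ε hε
  obtain ⟨g, hg⟩ := h.exists_norm_sub_mul_compContinuous_le p
    (δ := ε / (‖f‖ + 1)) (by positivity)
  refine ⟨f * pullbackBCF r h * pullbackBCF (p.comp r) g,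
    mul_pullbackBCF_mem_relSCAlg _ _ _, ?_⟩
  set u := h.toBCF - h.toBCF * g.toBCF.compContinuous p
  have hu : f * pullbackBCF r h - f * pullbackBCF r h * pullbackBCF (p.comp r) g =
      f * u.compContinuous r := by
    ext x
    simp only [u, pullbackBCF, BoundedContinuousFunction.coe_sub, BoundedContinuousFunction.coe_mul,
      BoundedContinuousFunction.coe_compContinuous, ContinuousMap.coe_comp, Pi.sub_apply,
      Pi.mul_apply, Function.comp_apply, ZeroAtInftyContinuousMap.toBCF_apply]
    ring
  calc dist (f * pullbackBCF r h) (f * pullbackBCF r h * pullbackBCF (p.comp r) g)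
      = ‖f * u.compContinuous r‖ := by rw [dist_eq_norm, hu]
    _ ≤ ‖f‖ * ‖u‖ := (norm_mul_le _ _).trans (by gcongr; exact u.norm_compContinuous_le r)
    _ ≤ ‖f‖ * (ε / (‖f‖ + 1)) := by gcongr
    _ < ε := by
      rw [mul_div_assoc', div_lt_iff₀ (by positivity)]
      nlinarith [norm_nonneg f]

end

theorem relSC_along_proper_composite_general
    {X Y Z : Type*} [TopologicalSpace X] [TopologicalSpace Y] [TopologicalSpace Z]
    [LocallyCompactSpace Z] [T2Space Z]
    (f₁ : C(X, Y)) (f₂ : C(Y, Z)) (hf₂ : IsProperMap (⇑f₂ : Y → Z)) :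
    relSCAlg f₁ = relSCAlg (f₂.comp f₁) ∧
      Nonempty ((RelSC f₁ : Type _) ≃ₜ (RelSC (f₂.comp f₁) : Type _)) := by
  have heq : relSCAlg f₁ = relSCAlg (f₂.comp f₁) :=
    (relSCAlg_le_comp f₁ f₂).antisymm (relSCAlg_comp_le f₁ f₂ hf₂.tendsto_cocompact)
  refine ⟨heq, ?_⟩
  unfold RelSC
  rw [heq]
  exact ⟨.refl _⟩

/-- If `f₂ : Y → Z` is proper, then `β_Y(X, f₁)` and `β_Z(X, f₂ ∘ f₁)` agree:
the defining C*-subalgebras of `C_b(X)` are equal, and the compactifications are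
homeomorphic. -/
theorem relSC_along_proper_composite
    {X Y Z : Type*} [TopologicalSpace X] [TopologicalSpace Y] [TopologicalSpace Z]
    [LocallyCompactSpace Y] [T2Space Y] [LocallyCompactSpace Z] [T2Space Z]
    (f₁ : C(X, Y)) (f₂ : C(Y, Z)) (hf₂ : IsProperMap (⇑f₂ : Y → Z)) :
    relSCAlg f₁ = relSCAlg (f₂.comp f₁) ∧
      Nonempty ((RelSC f₁ : Type _) ≃ₜ (RelSC (f₂.comp f₁) : Type _)) :=
  relSC_along_proper_composite_general f₁ f₂ hf₂
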